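/- In a discrete setting with mean-field distribution Q_φ(z) = ∏_{j=1}^n q_j(z_j|φ_j) over a finite product space and target log-density log P(z) = ∑_{k=1}^K log p_k(z) where each log p_k depends only on a subset of coordinates A_k, the gradient of the ELBO with respect to φ_i satisfies: ∂_{φ_i} E_{Q_φ}[log P(z) − log Q_φ(z)] = E_{Q_φ}[∂_{φ_i} log q_i(z_i|φ_i) · (∑_{k : i ∈ A_k} log p_k(z) − log q_i(z_i|φ_i))]. -/

import Mathlib

open Classical in
/-- Rao-Blackwellized BBVI gradient identity: for a mean-field distribution
`Q_φ(z) = ∏ j, q j (z j) (φ j)` and target `log P(z) = ∑ k, log p k z` with each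
`log p k` depending only on coordinates in `A k`, the `φ i`-derivative of the ELBO
equals the expectation of the `i`-th score times the "local" terms. -/
theorem bbvi_rao_blackwell (n K : ℕ) (Z : Fin n → Type*)
    [∀ j, Fintype (Z j)] [∀ j, Nonempty (Z j)]
    (q : ∀ j : Fin n, Z j → ℝ → ℝ)
    (hqpos : ∀ (j : Fin n) (z : Z j) (φ : ℝ), 0 < q j z φ)
    (hqdiff : ∀ (j : Fin n) (z : Z j), Differentiable ℝ (q j z))
    (hqsum : ∀ (j : Fin n) (φ : ℝ), ∑ z : Z j, q j z φ = 1)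
    (p : Fin K → (∀ j : Fin n, Z j) → ℝ)
    (hppos : ∀ (k : Fin K) (z : ∀ j : Fin n, Z j), 0 < p k z)
    (A : Fin K → Set (Fin n))
    (hA : ∀ (k : Fin K) (z z' : ∀ j : Fin n, Z j),
      (∀ j ∈ A k, z j = z' j) → p k z = p k z')
    (φ : Fin n → ℝ) (i : Fin n) :
    deriv (fun t =>
        ∑ z : (∀ j : Fin n, Z j),
          (∏ j, q j (z j) (Function.update φ i t j)) *
            ((∑ k, Real.log (p k z)) -
              ∑ j, Real.log (q j (z j) (Function.update φ i t j)))) (φ i) =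
      ∑ z : (∀ j : Fin n, Z j),
        (∏ j, q j (z j) (φ j)) *
          (deriv (fun t => Real.log (q i (z i) t)) (φ i) *
            ((∑ k ∈ Finset.univ.filter (fun k : Fin K => i ∈ A k), Real.log (p k z)) -
              Real.log (q i (z i) (φ i)))) := by
  classical
  have hqne : ∀ (j : Fin n) (z : Z j) (t : ℝ), q j z t ≠ 0 := fun j z t => (hqpos j z t).ne'
  -- derivative of the total mass of `q i` is zero
  have hsumderiv : ∑ a : Z i, deriv (q i a) (φ i) = 0 := by
    have h1 : HasDerivAt (fun t => ∑ a : Z i, q i a t)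
        (∑ a : Z i, deriv (q i a) (φ i)) (φ i) :=
      HasDerivAt.fun_sum fun a _ => ((hqdiff i a) (φ i)).hasDerivAt
    have h2 : (fun t => ∑ a : Z i, q i a t) = fun _ => (1 : ℝ) := funext fun t => hqsum i t
    have h3 := h1.deriv
    rw [h2] at h3
    simpa using h3.symm
  -- abbreviations
  set C : (∀ j, Z j) → ℝ := fun z => ∏ j ∈ Finset.univ.erase i, q j (z j) (φ j) with hCdef
  set R : (∀ j, Z j) → ℝ := fun z => ∑ j ∈ Finset.univ.erase i, Real.log (q j (z j) (φ j))
    with hRdef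
  set S : (∀ j, Z j) → ℝ := fun z => ∑ k, Real.log (p k z) with hSdef
  set Si : (∀ j, Z j) → ℝ :=
    fun z => ∑ k ∈ Finset.univ.filter (fun k : Fin K => i ∈ A k), Real.log (p k z) with hSidef
  set T : (∀ j, Z j) → ℝ :=
    fun z => ∑ k ∈ Finset.univ.filter (fun k : Fin K => ¬ i ∈ A k), Real.log (p k z) with hTdef
  have hST : ∀ z, S z = Si z + T z := fun z =>
    (Finset.sum_filter_add_sum_filter_not Finset.univ _ _).symm
  -- splitting the product and the log-sum at coordinate i
  have hprod : ∀ (z : ∀ j, Z j) (t : ℝ),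
      (∏ j, q j (z j) (Function.update φ i t j)) = q i (z i) t * C z := by
    intro z t
    rw [hCdef, ← Finset.mul_prod_erase Finset.univ _ (Finset.mem_univ i), Function.update_self]
    exact congrArg _ (Finset.prod_congr rfl fun j hj => by
      rw [Function.update_of_ne (Finset.ne_of_mem_erase hj)])
  have hlogsum : ∀ (z : ∀ j, Z j) (t : ℝ),
      (∑ j, Real.log (q j (z j) (Function.update φ i t j)))
        = Real.log (q i (z i) t) + R z := by
    intro z t
    rw [hRdef, ← Finset.add_sum_erase Finset.univ _ (Finset.mem_univ i), Function.update_self]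
    exact congrArg _ (Finset.sum_congr rfl fun j hj => by
      rw [Function.update_of_ne (Finset.ne_of_mem_erase hj)])
  -- derivative of each summand
  have hFz : ∀ z : (∀ j, Z j),
      HasDerivAt (fun t => (∏ j, q j (z j) (Function.update φ i t j)) *
          ((∑ k, Real.log (p k z)) - ∑ j, Real.log (q j (z j) (Function.update φ i t j))))
        (C z * deriv (q i (z i)) (φ i)
          * (S z - Real.log (q i (z i) (φ i)) - R z - 1)) (φ i) := by
    intro z
    have h1 : HasDerivAt (fun t => q i (z i) t) (deriv (q i (z i)) (φ i)) (φ i) :=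
      ((hqdiff i (z i)) (φ i)).hasDerivAt
    have h2 : HasDerivAt (fun t => Real.log (q i (z i) t))
        (deriv (q i (z i)) (φ i) / q i (z i) (φ i)) (φ i) := h1.log (hqne i (z i) (φ i))
    have h3 : HasDerivAt (fun t => q i (z i) t * C z)
        (deriv (q i (z i)) (φ i) * C z) (φ i) := h1.mul_const _
    have h4 : HasDerivAt (fun t => S z - (Real.log (q i (z i) t) + R z))
        (0 - deriv (q i (z i)) (φ i) / q i (z i) (φ i)) (φ i) :=
      (hasDerivAt_const _ _).sub (h2.add_const _)
    have h5 := h3.fun_mul h4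
    have heq : (fun t => (q i (z i) t * C z) * (S z - (Real.log (q i (z i) t) + R z)))
        = fun t => (∏ j, q j (z j) (Function.update φ i t j)) *
          ((∑ k, Real.log (p k z)) - ∑ j, Real.log (q j (z j) (Function.update φ i t j))) := by
      funext t
      rw [hprod z t, hlogsum z t, hSdef]
    rw [heq] at h5
    refine h5.congr_deriv ?_
    have hq := hqne i (z i) (φ i)
    have hd : q i (z i) (φ i) * (deriv (q i (z i)) (φ i) / q i (z i) (φ i))
        = deriv (q i (z i)) (φ i) := by field_simp
    linear_combination -(C z) * hd
  have hsum : HasDerivAt (fun t =>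
      ∑ z : (∀ j : Fin n, Z j),
        (∏ j, q j (z j) (Function.update φ i t j)) *
          ((∑ k, Real.log (p k z)) -
            ∑ j, Real.log (q j (z j) (Function.update φ i t j))))
      (∑ z : (∀ j : Fin n, Z j),
        C z * deriv (q i (z i)) (φ i)
          * (S z - Real.log (q i (z i) (φ i)) - R z - 1)) (φ i) :=
    HasDerivAt.fun_sum fun z _ => hFz z
  rw [hsum.deriv]
  -- rewrite the RHS
  have hprod' : ∀ z : (∀ j, Z j), (∏ j, q j (z j) (φ j)) = q i (z i) (φ i) * C z := by
    intro z
    have := hprod z (φ i)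
    rwa [Function.update_eq_self] at this
  have hld : ∀ a : Z i, deriv (fun t => Real.log (q i a t)) (φ i)
      = deriv (q i a) (φ i) / q i a (φ i) :=
    fun a => (((hqdiff i a) (φ i)).hasDerivAt.log (hqne i a (φ i))).deriv
  -- the key cancellation
  rw [← sub_eq_zero, ← Finset.sum_sub_distrib]
  have hterm : ∀ z : (∀ j, Z j),
      (C z * deriv (q i (z i)) (φ i) * (S z - Real.log (q i (z i) (φ i)) - R z - 1)) -
        ((∏ j, q j (z j) (φ j)) *
          (deriv (fun t => Real.log (q i (z i) t)) (φ i) *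
            ((∑ k ∈ Finset.univ.filter (fun k : Fin K => i ∈ A k), Real.log (p k z)) -
              Real.log (q i (z i) (φ i)))))
      = (C z * (T z - R z - 1)) * deriv (q i (z i)) (φ i) := by
    intro z
    rw [hprod' z, hld (z i), hST z]
    simp only [hSidef]
    have hq := hqne i (z i) (φ i)
    field_simp
    ring
  rw [Finset.sum_congr rfl fun z _ => hterm z]
  -- the summand `C z * (T z - R z - 1)` does not depend on the i-th coordinate
  have hD : ∀ (z : ∀ j, Z j) (a : Z i),
      C (Function.update z i a) * (T (Function.update z i a) - R (Function.update z i a) - 1)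
        = C z * (T z - R z - 1) := by
    intro z a
    have hC : C (Function.update z i a) = C z :=
      Finset.prod_congr rfl fun j hj => by
        rw [Function.update_of_ne (Finset.ne_of_mem_erase hj)]
    have hR : R (Function.update z i a) = R z :=
      Finset.sum_congr rfl fun j hj => by
        rw [Function.update_of_ne (Finset.ne_of_mem_erase hj)]
    have hT : T (Function.update z i a) = T z := by
      refine Finset.sum_congr rfl fun k hk => ?_
      have hik : i ∉ A k := (Finset.mem_filter.mp hk).2
      refine congrArg Real.log (hA k _ _ fun j hj => ?_)
      exact Function.update_of_ne (fun h => hik (by rw [← h]; exact hj)) _ _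
    rw [hC, hR, hT]
  -- sum against the score vanishes for i-independent integrands
  set e := Equiv.piSplitAt i Z with hedef
  have hupd : ∀ (a a' : Z i) (w : ∀ j : {j : Fin n // j ≠ i}, Z j),
      e.symm (a, w) = Function.update (e.symm (a', w)) i a := by
    intro a a' w
    funext j
    by_cases h : j = i
    · subst h
      simp [hedef, Equiv.piSplitAt]
    · simp [hedef, Equiv.piSplitAt, h, Function.update_of_ne h]
  have hi : ∀ (a : Z i) (w : ∀ j : {j : Fin n // j ≠ i}, Z j), e.symm (a, w) i = a := by
    intro a w
    simp [hedef, Equiv.piSplitAt]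
  obtain ⟨a₀⟩ := ‹∀ j, Nonempty (Z j)› i
  rw [← Equiv.sum_comp e.symm
    (fun z => (C z * (T z - R z - 1)) * deriv (q i (z i)) (φ i)), Fintype.sum_prod_type,
    Finset.sum_comm]
  refine Finset.sum_eq_zero fun w _ => ?_
  have hrw : ∀ a : Z i,
      (C (e.symm (a, w)) * (T (e.symm (a, w)) - R (e.symm (a, w)) - 1))
        * deriv (q i ((e.symm (a, w)) i)) (φ i)
      = (C (e.symm (a₀, w)) * (T (e.symm (a₀, w)) - R (e.symm (a₀, w)) - 1))
        * deriv (q i a) (φ i) := by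
    intro a
    rw [hi a w]
    congr 1
    rw [hupd a a₀ w]
    exact hD _ a
  rw [Finset.sum_congr rfl fun a _ => hrw a, ← Finset.mul_sum, hsumderiv, mul_zero]
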